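/- Simulation of SP by aSP: if N is an SP network and N → N' in SP, then N_[] →* N'_[] in aSP, where N_[] denotes the asynchronous network obtained from N by equipping each process with an empty message queue. -/

import Mathlib

set_option autoImplicit true
set_option linter.unusedVariables false

/-- Behaviours of Stateful Processes (SP). -/
inductive Behaviour (P E : Type) : Type where
  | send : P → E → Behaviour P E → Behaviour P E   -- q!e ; B
  | recv : P → Behaviour P E → Behaviour P E       -- p? ; B
  | cond : E → Behaviour P E → Behaviour P E → Behaviour P E  -- if e then B₁ else B₂
  | recdef : Nat → Behaviour P E → Behaviour P E → Behaviour P E  -- def X = B₂ in B₁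
  | call : Nat → Behaviour P E
  | nil : Behaviour P E
  deriving DecidableEq

/-- Substitution of a behaviour for a recursion variable: B[D/X]. -/
def bsubst {P E : Type} : Behaviour P E → Nat → Behaviour P E → Behaviour P E
  | .send q e B, X, D => .send q e (bsubst B X D)
  | .recv p B, X, D => .recv p (bsubst B X D)
  | .cond e B₁ B₂, X, D => .cond e (bsubst B₁ X D) (bsubst B₂ X D)
  | .recdef Y B₂ B₁, X, D =>
      if Y = X then .recdef Y B₂ B₁ else .recdef Y (bsubst B₂ X D) (bsubst B₁ X D)
  | .call Y, X, D => if Y = X then D else .call Y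
  | .nil, _, _ => .nil

/-- Structural precongruence on behaviours (recursion unfolding and garbage collection). -/
inductive BPre {P E : Type} : Behaviour P E → Behaviour P E → Prop where
  | refl : BPre B B
  | trans : BPre B₁ B₂ → BPre B₂ B₃ → BPre B₁ B₃
  | sendCong : BPre B B' → BPre (.send q e B) (.send q e B')
  | recvCong : BPre B B' → BPre (.recv p B) (.recv p B')
  | condCong : BPre B₁ B₁' → BPre B₂ B₂' → BPre (.cond e B₁ B₂) (.cond e B₁' B₂')
  | recCong : BPre B₂ B₂' → BPre B₁ B₁' → BPre (.recdef X B₂ B₁) (.recdef X B₂' B₁')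
  | unfold : BPre (.recdef X B₂ B₁) (.recdef X B₂ (bsubst B₁ X B₂))
  | procEnd : BPre (.recdef X B .nil) .nil
/-- Networks of Stateful Processes (SP). -/
inductive Net (P E Mem : Type) : Type where
  | actor : P → Mem → Behaviour P E → Net P E Mem  -- p ▷_σ B
  | par : Net P E Mem → Net P E Mem → Net P E Mem
  | nil : Net P E Mem

/-- Structural precongruence ⪯ on SP networks. -/
inductive NPre {P E Mem : Type} : Net P E Mem → Net P E Mem → Prop where
  | refl : NPre N N
  | trans : NPre N₁ N₂ → NPre N₂ N₃ → NPre N₁ N₃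
  | actorCong : BPre B B' → NPre (.actor p σ B) (.actor p σ B')
  | parCong : NPre N₁ N₁' → NPre N₂ N₂' → NPre (.par N₁ N₂) (.par N₁' N₂')
  | parComm : NPre (.par N₁ N₂) (.par N₂ N₁)
  | parAssoc : NPre (.par (.par N₁ N₂) N₃) (.par N₁ (.par N₂ N₃))
  | parAssoc' : NPre (.par N₁ (.par N₂ N₃)) (.par (.par N₁ N₂) N₃)
  | pZero : NPre (.actor p σ .nil) .nil
  | nZero : NPre (.par N .nil) N
  | nZero' : NPre N (.par N .nil)

/-- Synchronous semantics of SP networks. -/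
inductive StepN {P E Mem Val : Type}
    (ev : E → Mem → Val) (tr : Val → Bool) (up : Mem → Val → Mem) :
    Net P E Mem → Net P E Mem → Prop where
  | com : StepN ev tr up
      (.par (.actor p σp (.send q e B₁)) (.actor q σq (.recv p B₂)))
      (.par (.actor p σp B₁) (.actor q (up σq (ev e σp)) B₂))
  | thenB : tr (ev e σp) = true →
      StepN ev tr up (.actor p σp (.cond e B₁ B₂)) (.actor p σp B₁)
  | elseB : tr (ev e σp) = false →
      StepN ev tr up (.actor p σp (.cond e B₁ B₂)) (.actor p σp B₂)
  | ctx : StepN ev tr up (.par (.actor p σp B) N) (.par (.actor p σp' B') N') →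
      StepN ev tr up (.par (.actor p σp (.recdef X B₂ B)) N)
                     (.par (.actor p σp' (.recdef X B₂ B')) N')
  | par : StepN ev tr up N N' → StepN ev tr up (.par N M) (.par N' M)
  | struct : NPre N₁ N₂ → StepN ev tr up N₂ N₂' → NPre N₂' N₁' → StepN ev tr up N₁ N₁'
/-- Asynchronous Stateful Processes (aSP): networks of processes p ▷^ρ_σ B, each
    carrying a FIFO queue ρ of incoming messages ⟨sender, value⟩. -/
inductive ANet (P E Mem Val : Type) : Type where
  | actor : P → List (P × Val) → Mem → Behaviour P E → ANet P E Mem Val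
  | par : ANet P E Mem Val → ANet P E Mem Val → ANet P E Mem Val
  | nil : ANet P E Mem Val

/-- Congruence on queues: messages from distinct senders may be exchanged. -/
inductive QCong {P Val : Type} : List (P × Val) → List (P × Val) → Prop where
  | refl : QCong ρ ρ
  | trans : QCong ρ₁ ρ₂ → QCong ρ₂ ρ₃ → QCong ρ₁ ρ₃
  | cons : QCong ρ ρ' → QCong (m :: ρ) (m :: ρ')
  | swap : p ≠ q → QCong ((p, m) :: (q, m') :: ρ) ((q, m') :: (p, m) :: ρ)

/-- Structural precongruence ⪯ on aSP networks. -/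
inductive ANPre {P E Mem Val : Type} : ANet P E Mem Val → ANet P E Mem Val → Prop where
  | refl : ANPre N N
  | trans : ANPre N₁ N₂ → ANPre N₂ N₃ → ANPre N₁ N₃
  | actorCong : BPre B B' → ANPre (.actor p ρ σ B) (.actor p ρ σ B')
  | parCong : ANPre N₁ N₁' → ANPre N₂ N₂' → ANPre (.par N₁ N₂) (.par N₁' N₂')
  | parComm : ANPre (.par N₁ N₂) (.par N₂ N₁)
  | parAssoc : ANPre (.par (.par N₁ N₂) N₃) (.par N₁ (.par N₂ N₃))
  | parAssoc' : ANPre (.par N₁ (.par N₂ N₃)) (.par (.par N₁ N₂) N₃)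
  | pZero : ANPre (.actor p [] σ .nil) .nil
  | nZero : ANPre (.par N .nil) N
  | nZero' : ANPre N (.par N .nil)

/-- Asynchronous semantics of aSP networks. -/
inductive StepAN {P E Mem Val : Type}
    (ev : E → Mem → Val) (tr : Val → Bool) (up : Mem → Val → Mem) :
    ANet P E Mem Val → ANet P E Mem Val → Prop where
  | comS : StepAN ev tr up
      (.par (.actor p ρp σp (.send q e B)) (.actor q ρq σq Bq))
      (.par (.actor p ρp σp B) (.actor q (ρq ++ [(p, ev e σp)]) σq Bq))
  | comR : QCong ρq ((p, v) :: ρq') →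
      StepAN ev tr up (.actor q ρq σq (.recv p B)) (.actor q ρq' (up σq v) B)
  | thenB : tr (ev e σp) = true →
      StepAN ev tr up (.actor p ρ σp (.cond e B₁ B₂)) (.actor p ρ σp B₁)
  | elseB : tr (ev e σp) = false →
      StepAN ev tr up (.actor p ρ σp (.cond e B₁ B₂)) (.actor p ρ σp B₂)
  | ctx : StepAN ev tr up (.par (.actor p ρ σp B) N) (.par (.actor p ρ' σp' B') N') →
      StepAN ev tr up (.par (.actor p ρ σp (.recdef X B₂ B)) N)
                      (.par (.actor p ρ' σp' (.recdef X B₂ B')) N')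
  | par : StepAN ev tr up N N' → StepAN ev tr up (.par N M) (.par N' M)
  | struct : ANPre N₁ N₂ → StepAN ev tr up N₂ N₂' → ANPre N₂' N₁' → StepAN ev tr up N₁ N₁'
/-- The asynchronous network obtained from an SP network by equipping each process
    with an empty queue. -/
def withQueues {P E Mem Val : Type} : Net P E Mem → ANet P E Mem Val
  | .actor p σ B => .actor p [] σ B
  | .par N₁ N₂ => .par (withQueues N₁) (withQueues N₂)
  | .nil => .nil

/- Every SP rule except `com` is replayed by the same aSP rule. A communication
`p ▷ q!e; B₁ ‖ q ▷ p?; B₂` becomes a send, which puts the value into the empty queue of `q`,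
followed by the receive that consumes it. The two-step replay must survive the `ctx` rule,
which only applies to a network of the shape `p ▷ B ‖ N`; it does, because the intermediate
network still contains the actor `p` and structural precongruence can bring any actor to the
front. -/

namespace ANet

variable {P E Mem Val : Type}

def actors : ANet P E Mem Val → Set P
  | .actor p _ _ _ => {p}
  | .par N₁ N₂ => N₁.actors ∪ N₂.actors
  | .nil => ∅

@[simp] theorem actors_actor (p : P) (ρ : List (P × Val)) (σ : Mem) (B : Behaviour P E) :
    (ANet.actor p ρ σ B).actors = {p} := rfl

@[simp] theorem actors_par (N₁ N₂ : ANet P E Mem Val) :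
    (N₁.par N₂).actors = N₁.actors ∪ N₂.actors := rfl

@[simp] theorem actors_nil : (ANet.nil : ANet P E Mem Val).actors = ∅ := rfl

theorem exists_anpre_par_actor {p : P} {A : ANet P E Mem Val} (hp : p ∈ A.actors) :
    ∃ ρ σ B M, ANPre A (.par (.actor p ρ σ B) M) ∧ ANPre (.par (.actor p ρ σ B) M) A := by
  induction A with
  | actor q ρ σ B =>
    obtain rfl : p = q := hp
    exact ⟨ρ, σ, B, .nil, .nZero', .nZero⟩
  | par A₁ A₂ ih₁ ih₂ =>
    rcases hp with hp | hp
    · obtain ⟨ρ, σ, B, M, hto, hfrom⟩ := ih₁ hp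
      exact ⟨ρ, σ, B, .par M A₂, .trans (.parCong hto .refl) .parAssoc,
        .trans .parAssoc' (.parCong hfrom .refl)⟩
    · obtain ⟨ρ, σ, B, M, hto, hfrom⟩ := ih₂ hp
      exact ⟨ρ, σ, B, .par A₁ M,
        .trans (.parCong .refl hto)
          (.trans .parAssoc' (.trans (.parCong .parComm .refl) .parAssoc)),
        .trans .parAssoc'
          (.trans (.parCong .parComm .refl) (.trans .parAssoc (.parCong .refl hfrom)))⟩
  | nil => exact absurd hp (Set.notMem_empty p)

end ANet

theorem ANPre.actors_subset {P E Mem Val : Type} {N M : ANet P E Mem Val} (h : ANPre N M) :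
    M.actors ⊆ N.actors := by
  induction h with
  | refl | actorCong | pZero => simp
  | trans _ _ ih₁ ih₂ => exact ih₂.trans ih₁
  | parCong _ _ ih₁ ih₂ => exact Set.union_subset_union ih₁ ih₂
  | parComm => simp [Set.union_comm]
  | parAssoc | parAssoc' => simp [Set.union_assoc]
  | nZero | nZero' => simp

theorem NPre.withQueues {P E Mem Val : Type} {N M : Net P E Mem} (h : NPre N M) :
    ANPre (withQueues N : ANet P E Mem Val) (withQueues M) := by
  induction h with
  | refl => exact .refl
  | trans _ _ ih₁ ih₂ => exact .trans ih₁ ih₂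
  | actorCong hB => exact .actorCong hB
  | parCong _ _ ih₁ ih₂ => exact .parCong ih₁ ih₂
  | parComm => exact .parComm
  | parAssoc => exact .parAssoc
  | parAssoc' => exact .parAssoc'
  | pZero => exact .pZero
  | nZero => exact .nZero
  | nZero' => exact .nZero'

section SimSteps

variable {P E Mem Val : Type}
  (ev : E → Mem → Val) (tr : Val → Bool) (up : Mem → Val → Mem)

def SimSteps (A B : ANet P E Mem Val) : Prop :=
  StepAN ev tr up A B ∨
    ∃ C, StepAN ev tr up A C ∧ StepAN ev tr up C B ∧ B.actors ⊆ C.actors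

variable {ev tr up}

theorem SimSteps.reflTransGen {A B : ANet P E Mem Val} (h : SimSteps ev tr up A B) :
    Relation.ReflTransGen (StepAN ev tr up) A B := by
  rcases h with hAB | ⟨C, hAC, hCB, -⟩
  · exact .single hAB
  · exact .head hAC (.single hCB)

theorem simSteps_com (p q : P) (ρp : List (P × Val)) (σp σq : Mem) (e : E)
    (B₁ B₂ : Behaviour P E) :
    SimSteps ev tr up
      (.par (.actor p ρp σp (.send q e B₁)) (.actor q [] σq (.recv p B₂)))
      (.par (.actor p ρp σp B₁) (.actor q [] (up σq (ev e σp)) B₂)) := by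
  refine .inr ⟨.par (.actor p ρp σp B₁) (.actor q [(p, ev e σp)] σq (.recv p B₂)),
    .comS, .struct .parComm (.par (.comR .refl)) .parComm, ?_⟩
  simp

theorem SimSteps.par {A B : ANet P E Mem Val} (M : ANet P E Mem Val)
    (h : SimSteps ev tr up A B) : SimSteps ev tr up (.par A M) (.par B M) := by
  rcases h with hAB | ⟨C, hAC, hCB, hactors⟩
  · exact .inl (.par hAB)
  · exact .inr ⟨.par C M, .par hAC, .par hCB, Set.union_subset_union_left _ hactors⟩

theorem SimSteps.struct {A₁ A₂ B₁ B₂ : ANet P E Mem Val} (hA : ANPre A₁ A₂)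
    (h : SimSteps ev tr up A₂ B₂) (hB : ANPre B₂ B₁) : SimSteps ev tr up A₁ B₁ := by
  rcases h with hAB | ⟨C, hAC, hCB, hactors⟩
  · exact .inl (.struct hA hAB hB)
  · exact .inr ⟨C, .struct hA hAC .refl, .struct .refl hCB hB,
      hB.actors_subset.trans hactors⟩

theorem SimSteps.ctx {p : P} {ρ ρ' : List (P × Val)} {σ σ' : Mem} {X : Nat}
    {B B' B₂ : Behaviour P E} {N N' : ANet P E Mem Val}
    (h : SimSteps ev tr up (.par (.actor p ρ σ B) N) (.par (.actor p ρ' σ' B') N')) :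
    SimSteps ev tr up (.par (.actor p ρ σ (.recdef X B₂ B)) N)
      (.par (.actor p ρ' σ' (.recdef X B₂ B')) N') := by
  rcases h with hAB | ⟨C, hAC, hCB, hactors⟩
  · exact .inl (.ctx hAB)
  · have hp : p ∈ C.actors := hactors (by simp)
    obtain ⟨ρc, σc, Bc, M, hto, hfrom⟩ := ANet.exists_anpre_par_actor hp
    refine .inr ⟨.par (.actor p ρc σc (.recdef X B₂ Bc)) M,
      .ctx (.struct .refl hAC hto), .ctx (.struct hfrom hCB .refl), ?_⟩
    simpa using hactors.trans hfrom.actors_subset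

theorem simSteps_withQueues_of_stepN {N N' : Net P E Mem} (h : StepN ev tr up N N') :
    SimSteps ev tr up (withQueues N : ANet P E Mem Val) (withQueues N') := by
  induction h with
  | com => exact simSteps_com ..
  | thenB h => exact .inl (.thenB h)
  | elseB h => exact .inl (.elseB h)
  | ctx _ ih => exact ih.ctx
  | par _ ih => exact ih.par _
  | struct h₁ _ h₂ ih => exact .struct h₁.withQueues ih h₂.withQueues

end SimSteps

/-- Simulation of SP by aSP (Theorem 4.1): if N → N' in SP, then N_[] →* N'_[] in aSP,
    where N_[] equips each process with an empty queue. -/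
theorem sp_simulated_by_asp {P E Mem Val : Type}
    (ev : E → Mem → Val) (tr : Val → Bool) (up : Mem → Val → Mem)
    (N N' : Net P E Mem)
    (h : StepN ev tr up N N') :
    Relation.ReflTransGen (StepAN ev tr up)
      (withQueues N : ANet P E Mem Val) (withQueues N') :=
  (simSteps_withQueues_of_stepN h).reflTransGen
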